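/- Combined continuity estimate: under the hypotheses of the previous mild-solution estimate, there exists a constant C₂ = C₂(L, M, a, t₁) such that ‖u(t) − v(t)‖_V ≤ C₂ (1 + t^{−1/2}) ‖u₀ − v₀‖_H for all t ∈ (0, t₁]. In particular, u₀ ↦ u(t) is continuous from (H, ‖·‖_H) (restricted to bounded sets of V) to (V, ‖·‖_V) for each t > 0, uniformly on compact time intervals [t₀, t₁] with t₀ > 0. -/

import Mathlib

/-!
Subtracting the two mild formulations gives the singular integral inequality
`φ t ≤ A t^{-1/2} + b ∫₀ᵗ (t-s)^{-1/2} φ s ds` for `φ = ‖u - v‖`, with `A = M e^{a t₁} ‖ι u₀ - ι v₀‖`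
and `b = M L e^{a t₁}`. It is solved in a Bielecki-type weighted sup norm: let `N` be the maximum
of `e^{-l s} s^{1/2} φ s`. Splitting `(0, t)` at `t/2`, the kernel `(t-s)^{-1/2} s^{-1/2} e^{-l(t-s)}`
is dominated by `(t/2)^{-1/2} (k s + k (t-s))` with `k r = r^{-1/2} e^{-l r}`, and
`∫₀^∞ k = Γ(1/2) l^{-1/2} = √(π/l)`. Hence `N ≤ A + 2√2 √(π/l) b N`, so `N ≤ 2A` once `l > 32 π b²`,
that is, `φ t ≤ 2 A e^{l t} t^{-1/2}`.
-/

open MeasureTheory Set Real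

namespace SingularGronwall

noncomputable def kernel (l r : ℝ) : ℝ := r ^ (-(1:ℝ)/2) * exp (-(l * r))

lemma kernel_nonneg (l : ℝ) {r : ℝ} (hr : 0 ≤ r) : 0 ≤ kernel l r := by
  unfold kernel; positivity

lemma integrableOn_kernel_Ioi {l : ℝ} (hl : 0 < l) : IntegrableOn (kernel l) (Ioi 0) :=
  (integrableOn_rpow_mul_exp_neg_mul_rpow (s := -(1:ℝ)/2) (p := 1) (by norm_num) one_pos
    hl).congr_fun (fun r _ => by simp [kernel, neg_mul]) measurableSet_Ioi

lemma integral_kernel_Ioc_le {l : ℝ} (hl : 0 < l) (t : ℝ) :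
    ∫ r in Ioc 0 t, kernel l r ≤ √(π / l) := by
  calc ∫ r in Ioc 0 t, kernel l r ≤ ∫ r in Ioi 0, kernel l r :=
        setIntegral_mono_set (integrableOn_kernel_Ioi hl)
          (ae_restrict_of_forall_mem measurableSet_Ioi fun r hr => kernel_nonneg l (le_of_lt hr))
          Ioc_subset_Ioi_self.eventuallyLE
    _ = √(π / l) := by
        have h := integral_rpow_mul_exp_neg_mul_Ioi one_half_pos hl
        rw [Gamma_one_half_eq, ← sqrt_eq_rpow, ← sqrt_mul (by positivity), one_div_mul_eq_div] at h
        rw [← h]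
        norm_num [kernel]

lemma intervalIntegrable_kernel {l : ℝ} (hl : 0 < l) {t : ℝ} (ht : 0 ≤ t) :
    IntervalIntegrable (kernel l) volume 0 t :=
  (intervalIntegrable_iff_integrableOn_Ioc_of_le ht).mpr
    ((integrableOn_kernel_Ioi hl).mono_set Ioc_subset_Ioi_self)

lemma integrableOn_kernel_comp_sub {l : ℝ} (hl : 0 < l) {t : ℝ} (ht : 0 ≤ t) :
    IntegrableOn (fun s => kernel l (t - s)) (Ioc 0 t) := by
  have h := ((intervalIntegrable_kernel hl ht).comp_sub_left t).symm
  rw [sub_self, sub_zero] at h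
  exact (intervalIntegrable_iff_integrableOn_Ioc_of_le ht).mp h

lemma integral_kernel_comp_sub (l : ℝ) {t : ℝ} (ht : 0 ≤ t) :
    ∫ s in Ioc 0 t, kernel l (t - s) = ∫ s in Ioc 0 t, kernel l s := by
  rw [← intervalIntegral.integral_of_le ht, ← intervalIntegral.integral_of_le ht,
    intervalIntegral.integral_comp_sub_left, sub_self, sub_zero]

lemma rpow_mul_le_kernel_add_kernel {l s t : ℝ} (hl : 0 ≤ l) (hs : 0 < s) (hst : s ≤ t) :
    (t - s) ^ (-(1:ℝ)/2) * (exp (l * s) * s ^ (-(1:ℝ)/2)) ≤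
      exp (l * t) * (t / 2) ^ (-(1:ℝ)/2) * (kernel l s + kernel l (t - s)) := by
  have hexp : exp (l * s) = exp (l * t) * exp (-(l * (t - s))) := by
    rw [← exp_add]; ring_nf
  have hk0 := kernel_nonneg l hs.le
  have hk1 := kernel_nonneg l (sub_nonneg.mpr hst)
  have hc : 0 ≤ (t / 2) ^ (-(1:ℝ)/2) := rpow_nonneg (by linarith) _
  rcases le_total s (t / 2) with hs2 | hs2
  · have h1 : (t - s) ^ (-(1:ℝ)/2) ≤ (t / 2) ^ (-(1:ℝ)/2) :=
      rpow_le_rpow_of_nonpos (by linarith) (by linarith) (by norm_num)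
    have h2 : exp (-(l * (t - s))) ≤ exp (-(l * s)) := exp_le_exp.mpr (by nlinarith)
    calc (t - s) ^ (-(1:ℝ)/2) * (exp (l * s) * s ^ (-(1:ℝ)/2))
        = exp (l * t) * ((t - s) ^ (-(1:ℝ)/2) * (s ^ (-(1:ℝ)/2) * exp (-(l * (t - s))))) := by
          rw [hexp]; ring
      _ ≤ exp (l * t) * ((t / 2) ^ (-(1:ℝ)/2) * kernel l s) := by
          unfold kernel; gcongr
      _ ≤ _ := by rw [mul_assoc]; gcongr; exact le_add_of_nonneg_right hk1
  · have h1 : s ^ (-(1:ℝ)/2) ≤ (t / 2) ^ (-(1:ℝ)/2) :=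
      rpow_le_rpow_of_nonpos (by linarith) hs2 (by norm_num)
    calc (t - s) ^ (-(1:ℝ)/2) * (exp (l * s) * s ^ (-(1:ℝ)/2))
        = exp (l * t) * (s ^ (-(1:ℝ)/2) * kernel l (t - s)) := by
          rw [hexp, kernel]; ring
      _ ≤ exp (l * t) * ((t / 2) ^ (-(1:ℝ)/2) * kernel l (t - s)) := by gcongr
      _ ≤ _ := by rw [mul_assoc]; gcongr; exact le_add_of_nonneg_left hk0

lemma rpow_neg_half_div_two {t : ℝ} (ht : 0 ≤ t) :
    (t / 2) ^ (-(1:ℝ)/2) = √2 * t ^ (-(1:ℝ)/2) := by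
  rw [div_rpow ht zero_le_two, neg_div, rpow_neg zero_le_two, ← sqrt_eq_rpow, div_inv_eq_mul,
    mul_comm]

lemma integral_rpow_neg_half_mul_le {φ : ℝ → ℝ} {N l t : ℝ} (hl : 0 < l) (ht : 0 < t) (hN : 0 ≤ N)
    (hφ0 : ∀ s ∈ Ioc 0 t, 0 ≤ φ s)
    (hφ : ∀ s ∈ Ioc 0 t, φ s ≤ N * (exp (l * s) * s ^ (-(1:ℝ)/2))) :
    ∫ s in Ioc 0 t, (t - s) ^ (-(1:ℝ)/2) * φ s ≤
      2 * √2 * √(π / l) * N * exp (l * t) * t ^ (-(1:ℝ)/2) := by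
  set c := N * (exp (l * t) * (t / 2) ^ (-(1:ℝ)/2)) with hc_def
  have hk := (integrableOn_kernel_Ioi hl).mono_set (Ioc_subset_Ioi_self : Ioc 0 t ⊆ Ioi 0)
  have hk' := integrableOn_kernel_comp_sub hl ht.le
  calc ∫ s in Ioc 0 t, (t - s) ^ (-(1:ℝ)/2) * φ s
      ≤ ∫ s in Ioc 0 t, c * (kernel l s + kernel l (t - s)) := by
        refine integral_mono_of_nonneg (ae_restrict_of_forall_mem measurableSet_Ioc fun s hs =>
          mul_nonneg (rpow_nonneg (sub_nonneg.2 hs.2) _) (hφ0 s hs)) ((hk.add hk').const_mul c)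
          (ae_restrict_of_forall_mem measurableSet_Ioc fun s hs => ?_)
        calc (t - s) ^ (-(1:ℝ)/2) * φ s
            ≤ N * ((t - s) ^ (-(1:ℝ)/2) * (exp (l * s) * s ^ (-(1:ℝ)/2))) := by
              rw [mul_left_comm]
              exact mul_le_mul_of_nonneg_left (hφ s hs) (rpow_nonneg (sub_nonneg.2 hs.2) _)
          _ ≤ c * (kernel l s + kernel l (t - s)) := by
              rw [hc_def, mul_assoc N]
              exact mul_le_mul_of_nonneg_left (rpow_mul_le_kernel_add_kernel hl.le hs.1 hs.2) hN
    _ = c * (2 * ∫ s in Ioc 0 t, kernel l s) := by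
        rw [integral_const_mul, integral_add hk hk', integral_kernel_comp_sub l ht.le, two_mul]
    _ ≤ c * (2 * √(π / l)) := by gcongr; exact integral_kernel_Ioc_le hl t
    _ = 2 * √2 * √(π / l) * N * exp (l * t) * t ^ (-(1:ℝ)/2) := by
        rw [hc_def, rpow_neg_half_div_two ht.le]; ring

lemma mul_le_half_of_sq_lt {b l : ℝ} (hb : 0 ≤ b) (hl : 32 * π * b ^ 2 < l) :
    b * (2 * √2 * √(π / l)) ≤ 1 / 2 := by
  have hl0 : 0 < l := lt_of_le_of_lt (by positivity) hl
  have hsq : (b * (2 * √2 * √(π / l))) ^ 2 ≤ (1 / 2) ^ 2 := by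
    rw [mul_pow, mul_pow, mul_pow, sq_sqrt zero_le_two, sq_sqrt (by positivity)]
    rw [← sub_nonneg]
    have : (1 / 2) ^ 2 - b ^ 2 * (2 ^ 2 * 2 * (π / l)) = (l - 32 * π * b ^ 2) / (4 * l) := by
      field_simp; ring
    rw [this]; exact div_nonneg (by linarith) (by positivity)
  exact (pow_le_pow_iff_left₀ (by positivity) (by norm_num) two_ne_zero).mp hsq

lemma exp_mul_rpow_mul_exp_neg_mul_rpow {l s : ℝ} (hs : 0 < s) :
    exp (l * s) * s ^ (-(1:ℝ)/2) * (exp (-(l * s)) * s ^ (1/2:ℝ)) = 1 := by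
  rw [mul_mul_mul_comm, ← exp_add, ← rpow_add hs]; norm_num

theorem le_of_le_add_integral_rpow_neg_half {φ : ℝ → ℝ} {A b l T t : ℝ} (hA : 0 ≤ A)
    (hb : 0 ≤ b) (hl : 32 * π * b ^ 2 < l) (hφc : ContinuousOn φ (Icc 0 T))
    (hφ0 : ∀ s ∈ Icc 0 T, 0 ≤ φ s)
    (h : ∀ s ∈ Ioc 0 T,
      φ s ≤ A * s ^ (-(1:ℝ)/2) + b * ∫ r in Ioc 0 s, (s - r) ^ (-(1:ℝ)/2) * φ r)
    (ht : t ∈ Ioc 0 T) :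
    φ t ≤ 2 * A * exp (l * t) * t ^ (-(1:ℝ)/2) := by
  have hl0 : 0 < l := lt_of_le_of_lt (by positivity) hl
  set w : ℝ → ℝ := fun s => exp (l * s) * s ^ (-(1:ℝ)/2) with hw
  set g : ℝ → ℝ := fun s => exp (-(l * s)) * s ^ (1/2:ℝ) * φ s
  have hφw : ∀ s, 0 < s → φ s = w s * g s := fun s hs => by
    linear_combination -(φ s) * exp_mul_rpow_mul_exp_neg_mul_rpow (l := l) hs
  have hgc : ContinuousOn g (Icc 0 T) :=
    ((continuous_exp.comp (continuous_const.mul continuous_id).neg).continuousOn.mul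
      (continuousOn_id.rpow_const fun _ _ => Or.inr (by norm_num))).mul hφc
  obtain ⟨s₀, hs₀, hmax⟩ :=
    isCompact_Icc.exists_isMaxOn (nonempty_Icc.2 (ht.1.le.trans ht.2)) hgc
  set N := g s₀
  have hN0 : 0 ≤ N :=
    mul_nonneg (mul_nonneg (exp_pos _).le (rpow_nonneg hs₀.1 _)) (hφ0 s₀ hs₀)
  have hφN : ∀ s ∈ Ioc 0 T, φ s ≤ N * w s := fun s hs => by
    rw [hφw s hs.1, mul_comm]
    exact mul_le_mul_of_nonneg_right (hmax (Ioc_subset_Icc_self hs))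
      (mul_nonneg (exp_pos _).le (rpow_nonneg hs.1.le _))
  have hN : N ≤ 2 * A := by
    rcases hs₀.1.eq_or_lt with h0 | hpos
    · have : N = 0 := by simp [N, g, ← h0]
      linarith
    have hint := integral_rpow_neg_half_mul_le hl0 hpos hN0
      (fun s hs => hφ0 s ⟨hs.1.le, hs.2.trans hs₀.2⟩)
      (fun s hs => hφN s ⟨hs.1, hs.2.trans hs₀.2⟩)
    have hexp : 1 ≤ exp (l * s₀) := one_le_exp (by positivity)
    have key : φ s₀ ≤ (A + N / 2) * w s₀ := by
      calc φ s₀ ≤ A * s₀ ^ (-(1:ℝ)/2) + b * (2 * √2 * √(π / l) * N * w s₀) := by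
            refine (h s₀ ⟨hpos, hs₀.2⟩).trans ?_
            gcongr
            simpa only [hw, mul_assoc] using hint
        _ ≤ A * w s₀ + N / 2 * w s₀ := by
            refine add_le_add ?_ ?_
            · exact mul_le_mul_of_nonneg_left
                (le_mul_of_one_le_left (rpow_nonneg hpos.le _) hexp) hA
            · calc b * (2 * √2 * √(π / l) * N * w s₀)
                  = b * (2 * √2 * √(π / l)) * (N * w s₀) := by ring
                _ ≤ 1 / 2 * (N * w s₀) := by
                  gcongr; exact mul_le_half_of_sq_lt hb hl
                _ = N / 2 * w s₀ := by ring
        _ = (A + N / 2) * w s₀ := by ring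
    have hwpos : 0 < w s₀ := mul_pos (exp_pos _) (rpow_pos_of_pos hpos _)
    rw [hφw s₀ hpos, mul_comm (w s₀)] at key
    linarith [le_of_mul_le_mul_right key hwpos]
  calc φ t ≤ N * w t := hφN t ht
    _ ≤ 2 * A * w t := by
        gcongr; exact mul_nonneg (exp_pos _).le (rpow_nonneg ht.1.le _)
    _ = 2 * A * exp (l * t) * t ^ (-(1:ℝ)/2) := by rw [hw]; ring

end SingularGronwall

theorem norm_sub_le_of_mild {H V : Type*} [NormedAddCommGroup H] [NormedSpace ℝ H]
    [NormedAddCommGroup V] [NormedSpace ℝ V] {E : ℝ → H →L[ℝ] V} {F : V → H}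
    {u v : ℝ → V} {x y : H} {K L t : ℝ} (hK : 0 ≤ K) (ht : 0 < t)
    (hE : ∀ τ ∈ Ioc 0 t, ∀ w : H, ‖E τ w‖ ≤ K * τ ^ (-(1:ℝ)/2) * ‖w‖)
    (hu : ContinuousOn u (Icc 0 t)) (hv : ContinuousOn v (Icc 0 t))
    (hF : ∀ s ∈ Ioo 0 t, ‖F (u s) - F (v s)‖ ≤ L * ‖u s - v s‖)
    (huI : IntegrableOn (fun s => E (t - s) (F (u s))) (Ioc 0 t))
    (hvI : IntegrableOn (fun s => E (t - s) (F (v s))) (Ioc 0 t))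
    (huE : u t = E t x + ∫ s in Ioc 0 t, E (t - s) (F (u s)))
    (hvE : v t = E t y + ∫ s in Ioc 0 t, E (t - s) (F (v s))) :
    ‖u t - v t‖ ≤ K * ‖x - y‖ * t ^ (-(1:ℝ)/2) +
      K * L * ∫ s in Ioc 0 t, (t - s) ^ (-(1:ℝ)/2) * ‖u s - v s‖ := by
  have hdiff : u t - v t = E t (x - y) + ∫ s in Ioc 0 t, E (t - s) (F (u s) - F (v s)) := by
    simp only [map_sub]
    rw [integral_sub huI hvI, huE, hvE]
    abel
  have hker : IntegrableOn (fun s => (t - s) ^ (-(1:ℝ)/2)) (Icc 0 t) := by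
    have h := ((intervalIntegral.intervalIntegrable_rpow' (a := 0) (b := t)
      (by norm_num : -(1:ℝ) < -1/2)).comp_sub_left t).symm
    rw [sub_self, sub_zero] at h
    exact (intervalIntegrable_iff_integrableOn_Icc_of_le ht.le).mp h
  have hmaj : IntegrableOn (fun s => K * L * ((t - s) ^ (-(1:ℝ)/2) * ‖u s - v s‖)) (Ioo 0 t) :=
    ((hker.mul_continuousOn (hu.sub hv).norm isCompact_Icc).mono_set
      Ioo_subset_Icc_self).const_mul _
  calc ‖u t - v t‖
      ≤ ‖E t (x - y)‖ + ∫ s in Ioo 0 t, ‖E (t - s) (F (u s) - F (v s))‖ := by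
        rw [hdiff, ← integral_Ioc_eq_integral_Ioo]
        exact (norm_add_le _ _).trans (add_le_add le_rfl (norm_integral_le_integral_norm _))
    _ ≤ K * t ^ (-(1:ℝ)/2) * ‖x - y‖ +
          ∫ s in Ioo 0 t, K * L * ((t - s) ^ (-(1:ℝ)/2) * ‖u s - v s‖) := by
        refine add_le_add (hE t ⟨ht, le_rfl⟩ _) (integral_mono_of_nonneg
          (ae_of_all _ fun _ => norm_nonneg _) hmaj
          (ae_restrict_of_forall_mem measurableSet_Ioo fun s hs => ?_))
        have hts : 0 < t - s := sub_pos.2 hs.2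
        calc ‖E (t - s) (F (u s) - F (v s))‖
            ≤ K * (t - s) ^ (-(1:ℝ)/2) * ‖F (u s) - F (v s)‖ :=
              hE (t - s) ⟨hts, by linarith [hs.1]⟩ _
          _ ≤ K * (t - s) ^ (-(1:ℝ)/2) * (L * ‖u s - v s‖) :=
              mul_le_mul_of_nonneg_left (hF s hs) (mul_nonneg hK (rpow_nonneg hts.le _))
          _ = K * L * ((t - s) ^ (-(1:ℝ)/2) * ‖u s - v s‖) := by ring
    _ = K * ‖x - y‖ * t ^ (-(1:ℝ)/2) +
          K * L * ∫ s in Ioc 0 t, (t - s) ^ (-(1:ℝ)/2) * ‖u s - v s‖ := by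
        rw [integral_const_mul, ← integral_Ioc_eq_integral_Ioo]; ring

theorem mild_solution_continuity_estimate_general
    {H V : Type*} [NormedAddCommGroup H] [InnerProductSpace ℝ H]
    [NormedAddCommGroup V] [NormedSpace ℝ V]
    (ι : V →L[ℝ] H)
    (E : ℝ → H →L[ℝ] V) (M a : ℝ) (hM : 0 < M) (ha : 0 < a)
    (hEV : ∀ t : ℝ, 0 < t → ∀ w : H,
      ‖E t w‖ ≤ M * Real.exp (a * t) * t ^ (-(1:ℝ)/2) * ‖w‖)
    (F : V → H) (L t₁ : ℝ) (hL : 0 ≤ L) :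
    ∃ C₂ : ℝ, 0 < C₂ ∧
      ∀ (u v : ℝ → V) (u₀ v₀ : V), u 0 = u₀ → v 0 = v₀ →
        ContinuousOn u (Icc 0 t₁) → ContinuousOn v (Icc 0 t₁) →
        (∀ s : ℝ, s ∈ Icc 0 t₁ → ‖F (u s) - F (v s)‖ ≤ L * ‖u s - v s‖) →
        (∀ t ∈ Ioc 0 t₁,
          IntegrableOn (fun s => E (t - s) (F (u s))) (Ioc 0 t) volume) →
        (∀ t ∈ Ioc 0 t₁,
          IntegrableOn (fun s => E (t - s) (F (v s))) (Ioc 0 t) volume) →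
        (∀ t ∈ Ioc 0 t₁,
          u t = E t (ι u₀) + ∫ s in Ioc 0 t, E (t - s) (F (u s))) →
        (∀ t ∈ Ioc 0 t₁,
          v t = E t (ι v₀) + ∫ s in Ioc 0 t, E (t - s) (F (v s))) →
        ∀ t ∈ Ioc 0 t₁,
          ‖u t - v t‖ ≤ C₂ * (1 + t ^ (-(1:ℝ)/2)) * ‖ι u₀ - ι v₀‖ := by
  have hE : ∀ τ ∈ Ioc 0 t₁, ∀ w : H,
      ‖E τ w‖ ≤ M * exp (a * t₁) * τ ^ (-(1:ℝ)/2) * ‖w‖ := fun τ hτ w =>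
    (hEV τ hτ.1 w).trans (by gcongr; exacts [rpow_nonneg hτ.1.le _, hτ.2])
  set K := M * exp (a * t₁)
  set l := 32 * π * (K * L) ^ 2 + 1
  have hK : 0 ≤ K := by positivity
  refine ⟨2 * K * exp (l * t₁), by positivity, ?_⟩
  intro u v u₀ v₀ _ _ hu hv hF huI hvI huE hvE t ht
  have hmild : ∀ s ∈ Ioc 0 t₁, ‖u s - v s‖ ≤ K * ‖ι u₀ - ι v₀‖ * s ^ (-(1:ℝ)/2) +
      K * L * ∫ r in Ioc 0 s, (s - r) ^ (-(1:ℝ)/2) * ‖u r - v r‖ := fun s hs =>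
    norm_sub_le_of_mild hK hs.1 (fun τ hτ => hE τ ⟨hτ.1, hτ.2.trans hs.2⟩)
      (hu.mono (Icc_subset_Icc_right hs.2)) (hv.mono (Icc_subset_Icc_right hs.2))
      (fun r hr => hF r ⟨hr.1.le, hr.2.le.trans hs.2⟩) (huI s hs) (hvI s hs) (huE s hs) (hvE s hs)
  calc ‖u t - v t‖ ≤ 2 * (K * ‖ι u₀ - ι v₀‖) * exp (l * t) * t ^ (-(1:ℝ)/2) :=
        SingularGronwall.le_of_le_add_integral_rpow_neg_half (by positivity) (by positivity)
          (lt_add_one _) (hu.sub hv).norm (fun _ _ => norm_nonneg _) hmild ht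
    _ ≤ 2 * K * exp (l * t₁) * (1 + t ^ (-(1:ℝ)/2)) * ‖ι u₀ - ι v₀‖ := by
        have hδ : 0 ≤ 2 * K * ‖ι u₀ - ι v₀‖ := by positivity
        have hlt : exp (l * t) * t ^ (-(1:ℝ)/2) ≤ exp (l * t₁) * (1 + t ^ (-(1:ℝ)/2)) :=
          mul_le_mul (by gcongr; exact ht.2) (le_add_of_nonneg_left zero_le_one)
            (rpow_nonneg ht.1.le _) (exp_pos _).le
        linarith [mul_le_mul_of_nonneg_left hlt hδ]

/-- combined continuity estimate: under the hypotheses of the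
mild-solution difference estimate, there is a constant `C₂ = C₂(L, M, a, t₁)`
such that any two mild solutions `u, v` with data `u₀, v₀ ∈ V` satisfy
`‖u t - v t‖_V ≤ C₂ (1 + t^{-1/2}) ‖ι u₀ - ι v₀‖_H` on `(0, t₁]`. -/
theorem mild_solution_continuity_estimate
    {H V : Type*} [NormedAddCommGroup H] [InnerProductSpace ℝ H]
    [CompleteSpace H] [NormedAddCommGroup V] [NormedSpace ℝ V] [CompleteSpace V]
    (ι : V →L[ℝ] H) (hι : ∀ w : V, ‖ι w‖ ≤ ‖w‖)
    (E : ℝ → H →L[ℝ] V) (M a : ℝ) (hM : 0 < M) (ha : 0 < a)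
    (hEH : ∀ t : ℝ, 0 < t → ∀ w : H, ‖ι (E t w)‖ ≤ M * Real.exp (a * t) * ‖w‖)
    (hEV : ∀ t : ℝ, 0 < t → ∀ w : H,
      ‖E t w‖ ≤ M * Real.exp (a * t) * t ^ (-(1:ℝ)/2) * ‖w‖)
    (F : V → H) (L t₁ : ℝ) (hL : 0 ≤ L) (ht₁ : 0 < t₁) :
    ∃ C₂ : ℝ, 0 < C₂ ∧
      ∀ (u v : ℝ → V) (u₀ v₀ : V), u 0 = u₀ → v 0 = v₀ →
        ContinuousOn u (Icc 0 t₁) → ContinuousOn v (Icc 0 t₁) →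
        (∀ s : ℝ, s ∈ Icc 0 t₁ → ‖F (u s) - F (v s)‖ ≤ L * ‖u s - v s‖) →
        (∀ t ∈ Ioc 0 t₁,
          IntegrableOn (fun s => E (t - s) (F (u s))) (Ioc 0 t) volume) →
        (∀ t ∈ Ioc 0 t₁,
          IntegrableOn (fun s => E (t - s) (F (v s))) (Ioc 0 t) volume) →
        (∀ t ∈ Ioc 0 t₁,
          u t = E t (ι u₀) + ∫ s in Ioc 0 t, E (t - s) (F (u s))) →
        (∀ t ∈ Ioc 0 t₁,
          v t = E t (ι v₀) + ∫ s in Ioc 0 t, E (t - s) (F (v s))) →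
        ∀ t ∈ Ioc 0 t₁,
          ‖u t - v t‖ ≤ C₂ * (1 + t ^ (-(1:ℝ)/2)) * ‖ι u₀ - ι v₀‖ :=
  mild_solution_continuity_estimate_general ι E M a hM ha hEV F L t₁ hL
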